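/- arXiv:2409.11907 — 5 statements merged into one kernel-verified Lean document; each statement's English description precedes it below -/
import Mathlib

section
/- Let d ≥ 2 and let s be a positive integer. Then there exists a skew Bollobás system {(A_i^{(1)},…,A_i^{(d)})}_{1≤i≤m} of d-partitions of [s] with m = binom(s + d - 1, d - 1) such that A_i^{(1)} < A_i^{(2)} < ⋯ < A_i^{(d)} and A_i^{(1)} ∪ ⋯ ∪ A_i^{(d)} = [s] for every i ∈ [m]. Consequently, the maximum size of a skew Bollobás system of d-partitions with parts ordered as above and support of size s equals binom(s + d - 1, d - 1). -/
private lemma sbt_shift {t N : ℕ} (u : Fin t → Fin N) (hu : StrictMono u) :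
    ∀ a b : Fin t, (a : ℕ) ≤ (b : ℕ) → (u a : ℕ) + (b : ℕ) ≤ (u b : ℕ) + (a : ℕ) := by
  suffices h : ∀ m : ℕ, ∀ a b : Fin t, (b : ℕ) = (a : ℕ) + m →
      (u a : ℕ) + (b : ℕ) ≤ (u b : ℕ) + (a : ℕ) by
    intro a b hab
    exact h ((b : ℕ) - (a : ℕ)) a b (by omega)
  intro m
  induction m with
  | zero =>
    intro a b hb
    have : a = b := Fin.ext (by omega)
    subst this; omega
  | succ m ih =>
    intro a b hb
    have hb1 : (b : ℕ) - 1 < t := by omega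
    have h1 := ih a ⟨(b : ℕ) - 1, hb1⟩ (by simp; omega)
    have h2 : u ⟨(b : ℕ) - 1, hb1⟩ < u b := hu (by rw [Fin.lt_def]; simp; omega)
    rw [Fin.lt_def] at h2
    simp only [Fin.val_mk] at h1 h2 ⊢
    omega

private def sbW (t s : ℕ) (v : Fin t → Fin (s + 1)) (k : ℕ) : ℕ :=
  if h : k < t then (v ⟨k, h⟩ : ℕ) else s

private def sbC (t s : ℕ) (v : Fin t → Fin (s + 1)) (k : ℕ) : ℕ :=
  if k = 0 then 0 else sbW t s v (k - 1)

private lemma sbW_le (t s : ℕ) (v : Fin t → Fin (s + 1)) (k : ℕ) : sbW t s v k ≤ s := by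
  unfold sbW; split
  · exact Fin.is_le _
  · exact le_refl _

private lemma sbW_mono (t s : ℕ) (v : Fin t → Fin (s + 1)) (hv : Monotone v) :
    ∀ k l : ℕ, k ≤ l → sbW t s v k ≤ sbW t s v l := by
  intro k l hkl
  unfold sbW
  split
  · split
    · exact hv (show (⟨k, by omega⟩ : Fin t) ≤ ⟨l, by omega⟩ from by simp [Fin.le_def]; omega)
    · exact Fin.is_le _
  · split
    · omega
    · exact le_refl _

private lemma sbC_mono (t s : ℕ) (v : Fin t → Fin (s + 1)) (hv : Monotone v) :
    ∀ k l : ℕ, k ≤ l → sbC t s v k ≤ sbC t s v l := by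
  intro k l hkl
  unfold sbC
  split
  · split
    · exact le_refl _
    · exact Nat.zero_le _
  · rw [if_neg (by omega)]
    exact sbW_mono t s v hv _ _ (by omega)

private lemma sbC_le (t s : ℕ) (v : Fin t → Fin (s + 1)) (k : ℕ) : sbC t s v k ≤ s := by
  unfold sbC; split
  · exact Nat.zero_le _
  · exact sbW_le t s v _

-- every index strictly below the filter's card is in the "lower set"
private lemma sb_filter_lt (t s : ℕ) (v : Fin t → Fin (s + 1)) (hv : Monotone v) (x : ℕ)
    (k : Fin t) (hk : (k : ℕ) < (Finset.univ.filter fun k : Fin t => (v k : ℕ) < x).card) :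
    (v k : ℕ) < x := by
  by_contra hge
  have hsub : (Finset.univ.filter fun k' : Fin t => (v k' : ℕ) < x) ⊆ Finset.Iio k := by
    intro k' hk'
    simp only [Finset.mem_filter, Finset.mem_univ, true_and] at hk'
    rw [Finset.mem_Iio]
    by_contra hnk
    have h1 : (v k : ℕ) ≤ (v k' : ℕ) := hv (le_of_not_gt hnk)
    omega
  have := Finset.card_le_card hsub
  rw [Fin.card_Iio] at this
  omega

private lemma sb_idx (t s : ℕ) (v : Fin t → Fin (s + 1)) (hv : Monotone v) (x : ℕ)
    (hx1 : 1 ≤ x) (hxs : x ≤ s) :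
    (Finset.univ.filter fun k : Fin t => (v k : ℕ) < x).card ≤ t ∧
    sbC t s v ((Finset.univ.filter fun k : Fin t => (v k : ℕ) < x).card) < x ∧
    x ≤ sbC t s v ((Finset.univ.filter fun k : Fin t => (v k : ℕ) < x).card + 1) := by
  set P := (Finset.univ.filter fun k : Fin t => (v k : ℕ) < x).card with hP
  have hPt : P ≤ t := by
    have := Finset.card_filter_le (Finset.univ : Finset (Fin t)) fun k => (v k : ℕ) < x
    simpa using this
  refine ⟨hPt, ?_, ?_⟩
  · by_cases h0 : P = 0
    · simp [sbC, h0]; omega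
    · have h1 : P - 1 < t := by omega
      have h2 : (v ⟨P - 1, h1⟩ : ℕ) < x := sb_filter_lt t s v hv x ⟨P - 1, h1⟩ (by simp; omega)
      have h3 : sbC t s v P = (v ⟨P - 1, h1⟩ : ℕ) := by
        unfold sbC sbW
        rw [if_neg h0, dif_pos h1]
      omega
  · have hcP : sbC t s v (P + 1) = sbW t s v P := by unfold sbC; simp
    by_cases h1 : P < t
    · have h2 : x ≤ (v ⟨P, h1⟩ : ℕ) := by
        by_contra h2
        have hsub : Finset.Iic (⟨P, h1⟩ : Fin t) ⊆
            Finset.univ.filter fun k : Fin t => (v k : ℕ) < x := by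
          intro k hk
          simp only [Finset.mem_Iic] at hk
          simp only [Finset.mem_filter, Finset.mem_univ, true_and]
          have h3 : (v k : ℕ) ≤ (v ⟨P, h1⟩ : ℕ) := hv hk
          omega
        have := Finset.card_le_card hsub
        rw [Fin.card_Iic] at this
        simp only [Fin.val_mk] at this
        omega
      rw [hcP]; unfold sbW; rw [dif_pos h1]; omega
    · rw [hcP]; unfold sbW; rw [dif_neg h1]; omega


private def sbK (t s : ℕ) (v : {v : Fin t → Fin (s + 1) // Monotone v}) : ℕ :=
  (finFunctionFinEquiv v.1 : ℕ) + (t * s - ∑ k, (v.1 k : ℕ)) * (s + 1) ^ t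

private lemma sbK_inj (t s : ℕ) : Function.Injective (sbK t s) := by
  intro v u h
  have hv : (finFunctionFinEquiv v.1 : ℕ) < (s + 1) ^ t := (finFunctionFinEquiv v.1).isLt
  have hu : (finFunctionFinEquiv u.1 : ℕ) < (s + 1) ^ t := (finFunctionFinEquiv u.1).isLt
  have henc : (finFunctionFinEquiv v.1 : ℕ) = (finFunctionFinEquiv u.1 : ℕ) := by
    have h1 := congrArg (· % (s + 1) ^ t) h
    simp only [sbK, Nat.add_mul_mod_self_right] at h1
    rwa [Nat.mod_eq_of_lt hv, Nat.mod_eq_of_lt hu] at h1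
  have h2 : v.1 = u.1 := finFunctionFinEquiv.injective (Fin.val_injective henc)
  exact Subtype.ext h2

-- sum bound and strictness lemma for the key: if v ≤ u pointwise and v ≠ u then sbK u < sbK v
private lemma sbK_gt (t s : ℕ) (v u : {v : Fin t → Fin (s + 1) // Monotone v})
    (hle : ∀ k, (v.1 k : ℕ) ≤ (u.1 k : ℕ)) (hne : v ≠ u) : sbK t s u < sbK t s v := by
  have hne' : v.1 ≠ u.1 := fun h => hne (Subtype.ext h)
  obtain ⟨k0, hk0⟩ : ∃ k0, v.1 k0 ≠ u.1 k0 := by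
    by_contra h; push_neg at h; exact hne' (funext h)
  have hlt : ∑ k, (v.1 k : ℕ) < ∑ k, (u.1 k : ℕ) := by
    refine Finset.sum_lt_sum (fun k _ => hle k) ⟨k0, Finset.mem_univ _, ?_⟩
    have h1 := hle k0
    have h2 : (v.1 k0 : ℕ) ≠ (u.1 k0 : ℕ) := fun h => hk0 (Fin.ext h)
    omega
  have hsu : ∑ k, (u.1 k : ℕ) ≤ t * s := by
    calc ∑ k, (u.1 k : ℕ) ≤ ∑ _k : Fin t, s := Finset.sum_le_sum fun k _ => Fin.is_le _
    _ = t * s := by simp [Finset.sum_const, Finset.card_univ, mul_comm]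
  have hB : (finFunctionFinEquiv u.1 : ℕ) < (s + 1) ^ t := (finFunctionFinEquiv u.1).isLt
  calc sbK t s u = (finFunctionFinEquiv u.1 : ℕ) + (t * s - ∑ k, (u.1 k : ℕ)) * (s + 1) ^ t := rfl
  _ < (s + 1) ^ t + (t * s - ∑ k, (u.1 k : ℕ)) * (s + 1) ^ t := by
      exact Nat.add_lt_add_right hB _
  _ = (t * s - ∑ k, (u.1 k : ℕ) + 1) * (s + 1) ^ t := by ring
  _ ≤ (t * s - ∑ k, (v.1 k : ℕ)) * (s + 1) ^ t := Nat.mul_le_mul_right _ (by omega)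
  _ ≤ (finFunctionFinEquiv v.1 : ℕ) + (t * s - ∑ k, (v.1 k : ℕ)) * (s + 1) ^ t :=
      Nat.le_add_left _ _
  _ = sbK t s v := rfl

private lemma sb_card (t s : ℕ) (ht : 1 ≤ t) (hs : 1 ≤ s) :
    Fintype.card {v : Fin t → Fin (s + 1) // Monotone v} = (s + t).choose t := by
  have hst : ∀ (v : Fin t → Fin (s + 1)) (k : Fin t), (v k : ℕ) + (k : ℕ) < s + t := by
    intro v k
    have h1 := (v k).isLt
    have h2 := k.isLt
    omega
  have hg : ∀ (v : Fin t → Fin (s + 1)), Monotone v →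
      StrictMono (fun k : Fin t => (⟨(v k : ℕ) + (k : ℕ), hst v k⟩ : Fin (s + t))) := by
    intro v hv k l hkl
    have h1 : (v k : ℕ) ≤ (v l : ℕ) := hv hkl.le
    rw [Fin.lt_def]
    rw [Fin.lt_def] at hkl
    simp only [Fin.val_mk]
    omega
  have hcardim : ∀ (v : {v : Fin t → Fin (s + 1) // Monotone v}),
      (Finset.univ.image fun k : Fin t =>
        (⟨(v.1 k : ℕ) + (k : ℕ), hst v.1 k⟩ : Fin (s + t))).card = t := by
    intro v
    rw [Finset.card_image_of_injective _ (hg v.1 v.2).injective, Finset.card_univ,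
      Fintype.card_fin]
  let F : {v : Fin t → Fin (s + 1) // Monotone v} → {A : Finset (Fin (s + t)) // A.card = t} :=
    fun v => ⟨Finset.univ.image fun k : Fin t =>
      (⟨(v.1 k : ℕ) + (k : ℕ), hst v.1 k⟩ : Fin (s + t)), hcardim v⟩
  have hFbij : Function.Bijective F := by
    constructor
    · intro v u h
      have himg : (Finset.univ.image fun k : Fin t =>
          (⟨(v.1 k : ℕ) + (k : ℕ), hst v.1 k⟩ : Fin (s + t))) =
          Finset.univ.image fun k : Fin t =>
          (⟨(u.1 k : ℕ) + (k : ℕ), hst u.1 k⟩ : Fin (s + t)) := congrArg Subtype.val h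
      have hv := Finset.orderEmbOfFin_unique (s := Finset.univ.image fun k : Fin t =>
          (⟨(v.1 k : ℕ) + (k : ℕ), hst v.1 k⟩ : Fin (s + t))) (hcardim v)
        (f := fun k : Fin t => (⟨(v.1 k : ℕ) + (k : ℕ), hst v.1 k⟩ : Fin (s + t)))
        (fun x => Finset.mem_image_of_mem _ (Finset.mem_univ x)) (hg v.1 v.2)
      have hu := Finset.orderEmbOfFin_unique (s := Finset.univ.image fun k : Fin t =>
          (⟨(v.1 k : ℕ) + (k : ℕ), hst v.1 k⟩ : Fin (s + t))) (hcardim v)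
        (f := fun k : Fin t => (⟨(u.1 k : ℕ) + (k : ℕ), hst u.1 k⟩ : Fin (s + t)))
        (fun x => by rw [himg]; exact Finset.mem_image_of_mem _ (Finset.mem_univ x)) (hg u.1 u.2)
      have hfe : (fun k : Fin t => (⟨(v.1 k : ℕ) + (k : ℕ), hst v.1 k⟩ : Fin (s + t))) =
          fun k : Fin t => (⟨(u.1 k : ℕ) + (k : ℕ), hst u.1 k⟩ : Fin (s + t)) := by
        rw [hv, hu]
      apply Subtype.ext
      funext k
      have := congrFun hfe k
      apply Fin.ext
      have h2 : (v.1 k : ℕ) + (k : ℕ) = (u.1 k : ℕ) + (k : ℕ) := congrArg Fin.val this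
      omega
    · rintro ⟨A, hA⟩
      let u := A.orderEmbOfFin hA
      have hum : StrictMono u := (A.orderEmbOfFin hA).strictMono
      have hle : ∀ k : Fin t, (k : ℕ) ≤ (u k : ℕ) := by
        intro k
        have h0 : (0 : ℕ) < t := k.pos
        have h1 := sbt_shift u hum ⟨0, h0⟩ k (by simp)
        simp only [Fin.val_mk] at h1
        omega
      have hub : ∀ k : Fin t, (u k : ℕ) ≤ s + (k : ℕ) := by
        intro k
        have hlast : (k : ℕ) ≤ t - 1 := by have := k.isLt; omega
        have h1 := sbt_shift u hum k ⟨t - 1, by omega⟩ (by simpa using hlast)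
        have h2 : (u ⟨t - 1, by omega⟩ : ℕ) ≤ s + t - 1 := by
          have := (u ⟨t - 1, by omega⟩).isLt; omega
        simp only [Fin.val_mk] at h1
        omega
      let v : Fin t → Fin (s + 1) := fun k => ⟨(u k : ℕ) - (k : ℕ), by
        have := hub k; omega⟩
      have hvm : Monotone v := by
        intro k l hkl
        have h1 := sbt_shift u hum k l hkl
        have h2 := hle k
        have h3 := hle l
        simp only [v, Fin.le_def, Fin.val_mk]
        omega
      refine ⟨⟨v, hvm⟩, ?_⟩
      apply Subtype.ext
      simp only [F]
      have himg2 : (Finset.univ.image fun k : Fin t =>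
          (⟨(v k : ℕ) + (k : ℕ), hst v k⟩ : Fin (s + t))) = Finset.univ.image u := by
        apply Finset.image_congr
        intro k _
        apply Fin.ext
        simp only [Fin.val_mk, v]
        have := hle k
        omega
      rw [himg2]
      apply Finset.eq_of_subset_of_card_le
      · intro y hy
        simp only [Finset.mem_image, Finset.mem_univ, true_and] at hy
        obtain ⟨k, rfl⟩ := hy
        exact Finset.orderEmbOfFin_mem A hA k
      · rw [Finset.card_image_of_injective _ hum.injective, Finset.card_univ, Fintype.card_fin,
          hA]
  have := Fintype.card_congr (Equiv.ofBijective F hFbij)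
  rw [this, Fintype.card_finset_len, Fintype.card_fin]

/-- **Proposition (`N_skew(d,s) = C(s+d-1, d-1)`, lower bound).** For `d ≥ 2` and
`s ≥ 1` there is a skew Bollobás system `{(A_i^{(1)}, …, A_i^{(d)})}` of
`d`-partitions of `[s]` with `m = C(s + d - 1, d - 1)` members such that
`A_i^{(1)} < ⋯ < A_i^{(d)}` and `A_i^{(1)} ∪ ⋯ ∪ A_i^{(d)} = [s]` for every `i`. -/
theorem skew_bollobas_ordered_tight (d s : ℕ) (hd : 2 ≤ d) (hs : 1 ≤ s) :
    ∃ A : Fin ((s + d - 1).choose (d - 1)) → Fin d → Finset ℕ,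
      (∀ i r, A i r ⊆ Finset.Icc 1 s) ∧
      (∀ i, ∀ p q : Fin d, p ≠ q → Disjoint (A i p) (A i q)) ∧
      (∀ i j, i < j →
        ∃ p q : Fin d, p < q ∧ ((A i p) ∩ (A j q)).Nonempty) ∧
      (∀ i, ∀ r₁ r₂ : Fin d, r₁ < r₂ →
        ∀ x ∈ A i r₁, ∀ y ∈ A i r₂, x < y) ∧
      (∀ i, (Finset.univ.biUnion fun r : Fin d => A i r) = Finset.Icc 1 s) := by
  have htpos : 1 ≤ d - 1 := by omega
  have hcardV : Fintype.card {v : Fin (d - 1) → Fin (s + 1) // Monotone v} =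
      (s + d - 1).choose (d - 1) := by
    rw [sb_card (d - 1) s htpos hs]
    congr 1
    omega
  letI : LinearOrder {v : Fin (d - 1) → Fin (s + 1) // Monotone v} :=
    LinearOrder.lift' (sbK (d - 1) s) (sbK_inj (d - 1) s)
  let e := Fintype.orderIsoFinOfCardEq {v : Fin (d - 1) → Fin (s + 1) // Monotone v} hcardV
  refine ⟨fun i r => Finset.Icc (sbC (d - 1) s (e i).1 (r : ℕ) + 1)
    (sbC (d - 1) s (e i).1 ((r : ℕ) + 1)), ?_, ?_, ?_, ?_, ?_⟩
  case _ =>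
    -- subset
    intro i r x hx
    rw [Finset.mem_Icc] at hx ⊢
    have h1 := sbC_le (d - 1) s (e i).1 ((r : ℕ) + 1)
    omega
  case _ =>
    -- disjoint
    have horder : ∀ (i : Fin ((s + d - 1).choose (d - 1))) (p q : Fin d), p < q →
        Disjoint (Finset.Icc (sbC (d - 1) s (e i).1 (p : ℕ) + 1)
          (sbC (d - 1) s (e i).1 ((p : ℕ) + 1)))
          (Finset.Icc (sbC (d - 1) s (e i).1 (q : ℕ) + 1)
          (sbC (d - 1) s (e i).1 ((q : ℕ) + 1))) := by
      intro i p q hpq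
      rw [Finset.disjoint_left]
      intro x hx hx'
      rw [Finset.mem_Icc] at hx hx'
      have h1 : sbC (d - 1) s (e i).1 ((p : ℕ) + 1) ≤ sbC (d - 1) s (e i).1 (q : ℕ) :=
        sbC_mono (d - 1) s (e i).1 (e i).2 _ _ (by rw [Fin.lt_def] at hpq; omega)
      omega
    intro i p q hpq
    rcases lt_or_gt_of_ne hpq with h | h
    · exact horder i p q h
    · exact (horder i q p h).symm
  case _ =>
    -- skew
    intro i j hij
    have hK : sbK (d - 1) s (e i) < sbK (d - 1) s (e j) := by
      have h2 : sbK (d - 1) s (e i) ≤ sbK (d - 1) s (e j) := e.map_rel_iff.mpr (le_of_lt hij)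
      have h3 : ¬ sbK (d - 1) s (e j) ≤ sbK (d - 1) s (e i) :=
        fun h => absurd (e.map_rel_iff.mp h) (not_le_of_gt hij)
      omega
    have hne : e i ≠ e j := by
      intro h
      rw [h] at hK
      exact lt_irrefl _ hK
    set v := (e i).1 with hv0
    set u := (e j).1 with hu0
    have hv : Monotone v := (e i).2
    have hu : Monotone u := (e j).2
    have hex : ∃ k, (u k : ℕ) < (v k : ℕ) := by
      by_contra hno
      push_neg at hno
      have := sbK_gt (d - 1) s (e i) (e j) hno hne
      omega
    set S := Finset.univ.filter fun k : Fin (d - 1) => (u k : ℕ) < (v k : ℕ) with hS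
    have hSne : S.Nonempty := by
      obtain ⟨k, hk⟩ := hex
      exact ⟨k, Finset.mem_filter.mpr ⟨Finset.mem_univ _, hk⟩⟩
    set k := S.max' hSne with hk0
    have hk : (u k : ℕ) < (v k : ℕ) := (Finset.mem_filter.mp (S.max'_mem hSne)).2
    have hkmax : ∀ k' : Fin (d - 1), (u k' : ℕ) < (v k' : ℕ) → k' ≤ k := by
      intro k' h
      exact S.le_max' k' (Finset.mem_filter.mpr ⟨Finset.mem_univ _, h⟩)
    set x := (u k : ℕ) + 1 with hx0
    have hx1 : 1 ≤ x := by omega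
    have hxs : x ≤ s := by
      have : (v k : ℕ) ≤ s := Fin.is_le _
      omega
    obtain ⟨hPvt, hPv1, hPv2⟩ := sb_idx (d - 1) s v hv x hx1 hxs
    obtain ⟨hPut, hPu1, hPu2⟩ := sb_idx (d - 1) s u hu x hx1 hxs
    set Pv := (Finset.univ.filter fun k : Fin (d - 1) => (v k : ℕ) < x).card with hPv0
    set Pu := (Finset.univ.filter fun k : Fin (d - 1) => (u k : ℕ) < x).card with hPu0
    have hPvk : Pv ≤ (k : ℕ) := by
      have hsub : (Finset.univ.filter fun k' : Fin (d - 1) => (v k' : ℕ) < x) ⊆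
          Finset.Iio k := by
        intro k' hk'
        rw [Finset.mem_filter] at hk'
        rw [Finset.mem_Iio]
        by_contra hnk
        have h1 : (v k : ℕ) ≤ (v k' : ℕ) := hv (le_of_not_gt hnk)
        omega
      have := Finset.card_le_card hsub
      rw [Fin.card_Iio] at this
      omega
    have hPuk : (k : ℕ) + 1 ≤ Pu := by
      have hsub : Finset.Iic k ⊆
          Finset.univ.filter fun k' : Fin (d - 1) => (u k' : ℕ) < x := by
        intro k' hk'
        rw [Finset.mem_Iic] at hk'
        rw [Finset.mem_filter]
        refine ⟨Finset.mem_univ _, ?_⟩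
        have h1 : (u k' : ℕ) ≤ (u k : ℕ) := hu hk'
        omega
      have := Finset.card_le_card hsub
      rw [Fin.card_Iic] at this
      omega
    refine ⟨⟨Pv, by omega⟩, ⟨Pu, by omega⟩, by rw [Fin.lt_def]; simp; omega, x, ?_⟩
    rw [Finset.mem_inter, Finset.mem_Icc, Finset.mem_Icc]
    simp only [Fin.val_mk]
    rw [hv0] at hPv1 hPv2
    rw [hu0] at hPu1 hPu2
    omega
  case _ =>
    -- ordered
    intro i r₁ r₂ h12 x hx y hy
    rw [Finset.mem_Icc] at hx hy
    have h1 : sbC (d - 1) s (e i).1 ((r₁ : ℕ) + 1) ≤ sbC (d - 1) s (e i).1 (r₂ : ℕ) :=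
      sbC_mono (d - 1) s (e i).1 (e i).2 _ _ (by rw [Fin.lt_def] at h12; omega)
    omega
  case _ =>
    -- union
    intro i
    ext x
    simp only [Finset.mem_biUnion, Finset.mem_univ, true_and]
    constructor
    · rintro ⟨r, hr⟩
      rw [Finset.mem_Icc] at hr ⊢
      have h1 := sbC_le (d - 1) s (e i).1 ((r : ℕ) + 1)
      omega
    · intro hx
      rw [Finset.mem_Icc] at hx
      obtain ⟨hPt, hP1, hP2⟩ := sb_idx (d - 1) s (e i).1 (e i).2 x hx.1 hx.2
      refine ⟨⟨(Finset.univ.filter fun k : Fin (d - 1) => ((e i).1 k : ℕ) < x).card,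
        by omega⟩, ?_⟩
      rw [Finset.mem_Icc]
      simp only [Fin.val_mk]
      omega
end

section
/- Let d ≥ 2 and let D = {(A_i^{(1)},…,A_i^{(d)})}_{1≤i≤m} be a strong Bollobás system of d-partitions of [n] such that A_i^{(1)} < A_i^{(2)} < ⋯ < A_i^{(d)} for every i ∈ [m]. Then m ≤ 1. -/
/-- **Proposition (`N_strong(d,s) = 1`).** If
`{(A_i^{(1)}, …, A_i^{(d)})}_{1 ≤ i ≤ m}` is a strong Bollobás system of
`d`-partitions of `[n]` with `A_i^{(1)} < A_i^{(2)} < ⋯ < A_i^{(d)}` for every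
`i`, then `m ≤ 1`. -/
theorem strong_bollobas_ordered_count (n d m : ℕ) (hd : 2 ≤ d)
    (A : Fin m → Fin d → Finset ℕ)
    (hAsub : ∀ i r, A i r ⊆ Finset.Icc 1 n)
    (hAdisj : ∀ i, ∀ p q : Fin d, p ≠ q → Disjoint (A i p) (A i q))
    (hstrong : ∀ i j : Fin m, i < j →
      ∃ u₁ u₂ v₁ v₂ : Fin d, u₁ < u₂ ∧ v₁ < v₂ ∧
        ((A i u₁) ∩ (A j v₂)).Nonempty ∧ ((A i u₂) ∩ (A j v₁)).Nonempty)
    (hord : ∀ i, ∀ r₁ r₂ : Fin d, r₁ < r₂ →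
      ∀ x ∈ A i r₁, ∀ y ∈ A i r₂, x < y) :
    m ≤ 1 := by
  by_contra h
  push_neg at h
  have hm : 2 ≤ m := h
  obtain ⟨u₁, u₂, v₁, v₂, hu, hv, ⟨x, hx⟩, ⟨y, hy⟩⟩ :=
    hstrong ⟨0, by omega⟩ ⟨1, by omega⟩ (Fin.mk_lt_mk.mpr (by omega))
  simp only [Finset.mem_inter] at hx hy
  have h1 := hord ⟨0, by omega⟩ u₁ u₂ hu x hx.1 y hy.1
  have h2 := hord ⟨1, by omega⟩ v₁ v₂ hv y hy.2 x hx.2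
  omega
end

section
/- Let d ≥ 2 and let D = {(A_i^{(1)},…,A_i^{(d)})}_{1≤i≤m} be a weak Bollobás system of d-partitions of [n] such that A_i^{(1)} < A_i^{(2)} < ⋯ < A_i^{(d)} for every i ∈ [m], and let s = |⋃_{i=1}^m ⋃_{r=1}^d A_i^{(r)}|. Then m ≤ binom(s + d - 1, d - 1). (Combined with the matching lower bound for skew systems, the maximum size of such a weak Bollobás system equals that of a skew Bollobás system.) -/
/-!
Order the support `S`. To a row `i` attach its cut profile: for `k < d - 1`, the number of points
of `S` that lie at or below the largest element of `A_i^(1) ∪ ⋯ ∪ A_i^(k+1)`. Cuts of `S` of equal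
size coincide, so if rows `i` and `j` had the same profile, every point of `A_i^(p)` would lie at or
below the `p`-th cut of row `j`, hence strictly below `A_j^(q)` for all `q > p` (and symmetrically),
contradicting the weak Bollobás condition. Thus `i ↦ profile` is injective into the monotone maps
from `[d - 1]` to `{0, …, s}`, of which there are `C(s + d - 1, d - 1)` by stars and bars.
-/

open Finset Function

theorem Finset.filter_le_eq_of_card_eq {ι γ : Type*} [LinearOrder γ] {s : Finset ι}
    {f : ι → γ} {a b : γ} (h : #{x ∈ s | f x ≤ a} = #{x ∈ s | f x ≤ b}) :
    {x ∈ s | f x ≤ a} = {x ∈ s | f x ≤ b} := by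
  rcases le_total a b with hab | hba
  · exact eq_of_subset_of_card_le (monotone_filter_right s fun _ _ hx => hx.trans hab) h.ge
  · exact (eq_of_subset_of_card_le
      (monotone_filter_right s fun _ _ hx => hx.trans hba) h.le).symm

theorem List.eq_of_monotone_of_coe_ofFn_eq {α : Type*} [PartialOrder α] {k : ℕ}
    {f g : Fin k → α} (hf : Monotone f) (hg : Monotone g)
    (h : (List.ofFn f : Multiset α) = List.ofFn g) : f = g :=
  List.ofFn_injective <|
    (Multiset.coe_eq_coe.1 h).eq_of_pairwise' hf.sortedLE_ofFn.pairwise hg.sortedLE_ofFn.pairwise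

theorem Fintype.card_le_choose_of_injective_monotone {ι β : Type*} [Fintype ι] [Fintype β]
    [PartialOrder β] {k : ℕ} {f : ι → Fin k → β} (hf : Injective f)
    (hmono : ∀ i, Monotone (f i)) : card ι ≤ (card β + k - 1).choose k := by
  classical
  rw [← Sym.card_sym_eq_choose]
  refine card_le_of_injective (fun i => (⟨List.ofFn (f i), by simp⟩ : Sym β k))
    fun i j hij => hf ?_
  exact List.eq_of_monotone_of_coe_ofFn_eq (hmono i) (hmono j) (congrArg Subtype.val hij)

section

variable {α : Type*} [LinearOrder α] {n : ℕ}

def prefixMax (R : Fin n → Finset α) (k : Fin n) : WithBot α :=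
  (Iic k).sup fun r => (R r).max

theorem prefixMax_mono (R : Fin n → Finset α) : Monotone (prefixMax R) :=
  fun _ _ hkl => sup_mono (Iic_subset_Iic.2 hkl)

theorem coe_le_prefixMax {R : Fin n → Finset α} {p k : Fin n} (hpk : p ≤ k) {x : α}
    (hx : x ∈ R p) : (x : WithBot α) ≤ prefixMax R k :=
  (le_max hx).trans (le_sup (f := fun r => (R r).max) (mem_Iic.2 hpk))

theorem prefixMax_lt_coe {R : Fin n → Finset α}
    (hR : ∀ r₁ r₂ : Fin n, r₁ < r₂ → ∀ x ∈ R r₁, ∀ y ∈ R r₂, x < y) {k q : Fin n}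
    (hkq : k < q) {y : α} (hy : y ∈ R q) : prefixMax R k < y := by
  refine (Finset.sup_lt_iff (WithBot.bot_lt_coe y)).2 fun r hr => ?_
  rw [max_eq_sup_coe]
  exact (Finset.sup_lt_iff (WithBot.bot_lt_coe y)).2 fun x hx =>
    WithBot.coe_lt_coe.2 (hR r q ((mem_Iic.1 hr).trans_lt hkq) x hx y hy)

/-- The last part of `R` is left out of the profile: no part comes after it. -/
def cutProfile {e : ℕ} (S : Finset α) (R : Fin (e + 1) → Finset α) (k : Fin e) :
    Fin (#S + 1) :=
  ⟨#{x ∈ S | WithBot.some x ≤ prefixMax R k.castSucc}, Nat.lt_succ_of_le (card_filter_le _ _)⟩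

theorem cutProfile_mono {e : ℕ} (S : Finset α) (R : Fin (e + 1) → Finset α) :
    Monotone (cutProfile S R) := fun _ _ hkl =>
  Fin.mk_le_mk.2 <| card_le_card <| monotone_filter_right S fun _ _ hx =>
    hx.trans (prefixMax_mono R (Fin.castSucc_le_castSucc_iff.2 hkl))

theorem disjoint_of_cutProfile_eq {e : ℕ} {S : Finset α} {R R' : Fin (e + 1) → Finset α}
    (hRS : ∀ r, R r ⊆ S)
    (hR' : ∀ r₁ r₂ : Fin (e + 1), r₁ < r₂ → ∀ x ∈ R' r₁, ∀ y ∈ R' r₂, x < y)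
    (h : cutProfile S R = cutProfile S R') {p q : Fin (e + 1)} (hpq : p < q) :
    Disjoint (R p) (R' q) := by
  rw [disjoint_left]
  intro x hxp hxq
  set k := p.castPred (Fin.ne_last_of_lt hpq)
  have hcuts : {y ∈ S | WithBot.some y ≤ prefixMax R k.castSucc} =
      {y ∈ S | WithBot.some y ≤ prefixMax R' k.castSucc} :=
    filter_le_eq_of_card_eq (congrArg Fin.val (congrFun h k))
  have hx : x ∈ {y ∈ S | WithBot.some y ≤ prefixMax R k.castSucc} :=
    mem_filter.2 ⟨hRS p hxp, coe_le_prefixMax (by simp [k]) hxp⟩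
  rw [hcuts, mem_filter, Fin.castSucc_castPred] at hx
  exact (prefixMax_lt_coe hR' hpq hxq).not_ge hx.2

end

theorem weak_bollobas_ordered_count_general (d m : ℕ) (hd : 2 ≤ d)
    (A : Fin m → Fin d → Finset ℕ)
    (hweak : ∀ i j : Fin m, i < j →
      ∃ p q : Fin d, p < q ∧
        (((A i p) ∩ (A j q)).Nonempty ∨ ((A j p) ∩ (A i q)).Nonempty))
    (hord : ∀ i, ∀ r₁ r₂ : Fin d, r₁ < r₂ →
      ∀ x ∈ A i r₁, ∀ y ∈ A i r₂, x < y) :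
    m ≤ ((Finset.univ.biUnion fun i : Fin m =>
          Finset.univ.biUnion fun r : Fin d => A i r).card + d - 1).choose (d - 1) := by
  obtain ⟨e, rfl⟩ : ∃ e, d = e + 1 := ⟨d - 1, by omega⟩
  set S := univ.biUnion fun i : Fin m => univ.biUnion fun r : Fin (e + 1) => A i r
  have hAS : ∀ i r, A i r ⊆ S := fun i r =>
    (subset_biUnion_of_mem (A i) (mem_univ r)).trans
      (subset_biUnion_of_mem (fun i => univ.biUnion fun r => A i r) (mem_univ i))
  have hinj : Injective fun i => cutProfile S (A i) :=
    Injective.of_lt_imp_ne fun i j hij heq => by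
      obtain ⟨p, q, hpq, hij' | hji'⟩ := hweak i j hij
      · exact not_disjoint_iff_nonempty_inter.2 hij'
          (disjoint_of_cutProfile_eq (hAS i) (hord j) heq hpq)
      · exact not_disjoint_iff_nonempty_inter.2 hji'
          (disjoint_of_cutProfile_eq (hAS j) (hord i) heq.symm hpq)
  simpa using Fintype.card_le_choose_of_injective_monotone hinj fun i => cutProfile_mono S (A i)

/-- **Proposition (`N_weak(d,s) ≤ C(s+d-1, d-1)`).** If
`{(A_i^{(1)}, …, A_i^{(d)})}_{1 ≤ i ≤ m}` is a weak Bollobás system of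
`d`-partitions of `[n]` with `A_i^{(1)} < A_i^{(2)} < ⋯ < A_i^{(d)}` for every
`i`, and `s` is the size of the support, then `m ≤ C(s + d - 1, d - 1)`. -/
theorem weak_bollobas_ordered_count (n d m : ℕ) (hd : 2 ≤ d)
    (A : Fin m → Fin d → Finset ℕ)
    (hAsub : ∀ i r, A i r ⊆ Finset.Icc 1 n)
    (hAdisj : ∀ i, ∀ p q : Fin d, p ≠ q → Disjoint (A i p) (A i q))
    (hweak : ∀ i j : Fin m, i < j →
      ∃ p q : Fin d, p < q ∧
        (((A i p) ∩ (A j q)).Nonempty ∨ ((A j p) ∩ (A i q)).Nonempty))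
    (hord : ∀ i, ∀ r₁ r₂ : Fin d, r₁ < r₂ →
      ∀ x ∈ A i r₁, ∀ y ∈ A i r₂, x < y) :
    m ≤ ((Finset.univ.biUnion fun i : Fin m =>
          Finset.univ.biUnion fun r : Fin d => A i r).card + d - 1).choose (d - 1) :=
  weak_bollobas_ordered_count_general d m hd A hweak hord
end

section
/- Let D = {(A_i^{(1)}, A_i^{(2)}, A_i^{(3)})}_{1≤i≤m} be a Bollobás system of 3-partitions of [n] such that A_i^{(1)} < A_i^{(2)} < A_i^{(3)} for every i ∈ [m], and let s = |⋃_{i=1}^m ⋃_{r=1}^3 A_i^{(r)}|. Then m ≤ ⌊s/2⌋ + 1. -/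
private lemma coe_lt_min_of {s : Finset ℕ} {e : ℕ} (h : ∀ x ∈ s, e < x) :
    (e : WithTop ℕ) < s.min := by
  rcases eq_or_ne s.min ⊤ with h' | h'
  · rw [h']; exact WithTop.coe_lt_top e
  · obtain ⟨a, ha⟩ := WithTop.ne_top_iff_exists.mp h'
    have hm := Finset.mem_of_min ha.symm
    rw [← ha]
    exact WithTop.coe_lt_coe.mpr (h a hm)

/-- **Proposition (`N_B(3,s) ≤ ⌊s/2⌋ + 1`).** If
`{(A_i^{(1)}, A_i^{(2)}, A_i^{(3)})}_{1 ≤ i ≤ m}` is a Bollobás system of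
`3`-partitions of `[n]` with `A_i^{(1)} < A_i^{(2)} < A_i^{(3)}` for every `i`,
and `s` is the size of the support, then `m ≤ ⌊s/2⌋ + 1`. -/
theorem bollobas_three_ordered_count (n m : ℕ)
    (A : Fin m → Fin 3 → Finset ℕ)
    (hAsub : ∀ i r, A i r ⊆ Finset.Icc 1 n)
    (hAdisj : ∀ i, ∀ p q : Fin 3, p ≠ q → Disjoint (A i p) (A i q))
    (hB : ∀ i j : Fin m, i ≠ j →
      ∃ p q : Fin 3, p < q ∧ ((A i p) ∩ (A j q)).Nonempty)
    (hord : ∀ i, ∀ r₁ r₂ : Fin 3, r₁ < r₂ →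
      ∀ x ∈ A i r₁, ∀ y ∈ A i r₂, x < y) :
    m ≤ (Finset.univ.biUnion fun i : Fin m =>
          Finset.univ.biUnion fun r : Fin 3 => A i r).card / 2 + 1 := by
  classical
  set S := (Finset.univ.biUnion fun i : Fin m =>
          Finset.univ.biUnion fun r : Fin 3 => A i r) with hS
  have hmemS : ∀ i r, ∀ x ∈ A i r, x ∈ S := by
    intro i r x hx
    simp only [hS, Finset.mem_biUnion]
    exact ⟨i, Finset.mem_univ _, r, Finset.mem_univ _, hx⟩
  set t : Fin m → WithTop ℕ := fun i => (A i 1 ∪ A i 2).min with ht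
  set u : Fin m → WithTop ℕ := fun i => (A i 2).min with hu
  have htu : ∀ i, t i ≤ u i := fun i => Finset.min_mono Finset.subset_union_right
  -- per ordered pair
  have key : ∀ i j, i ≠ j → t j < t i ∨ u j < u i := by
    intro i j hij
    obtain ⟨p, q, hpq, e, he⟩ := hB i j hij
    rw [Finset.mem_inter] at he
    obtain ⟨hei, hej⟩ := he
    have hlt_t : ∀ (k : Fin m) (x : ℕ), x ∈ A k 0 → (x : WithTop ℕ) < t k := by
      intro k x hx
      refine coe_lt_min_of ?_
      intro y hy
      rcases Finset.mem_union.mp hy with hy | hy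
      · exact hord k 0 1 (by decide) x hx y hy
      · exact hord k 0 2 (by decide) x hx y hy
    have hlt_u : ∀ (k : Fin m) (x : ℕ), x ∈ A k 1 → (x : WithTop ℕ) < u k := by
      intro k x hx
      exact coe_lt_min_of fun y hy => hord k 1 2 (by decide) x hx y hy
    have hle_t : ∀ (k : Fin m) (x : ℕ), x ∈ A k 1 ∪ A k 2 → t k ≤ (x : WithTop ℕ) :=
      fun k x hx => Finset.min_le hx
    have hle_u : ∀ (k : Fin m) (x : ℕ), x ∈ A k 2 → u k ≤ (x : WithTop ℕ) :=
      fun k x hx => Finset.min_le hx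
    fin_cases p <;> fin_cases q <;> first
      | exact absurd hpq (by decide)
      | (exact Or.inl (lt_of_le_of_lt (hle_t j e (Finset.mem_union_left _ hej)) (hlt_t i e hei)))
      | (exact Or.inl (lt_of_le_of_lt (hle_t j e (Finset.mem_union_right _ hej)) (hlt_t i e hei)))
      | (exact Or.inr (lt_of_le_of_lt (hle_u j e hej) (hlt_u i e hei)))
  have key2 : ∀ i j, i ≠ j → (t i < t j ∧ u j < u i) ∨ (t j < t i ∧ u i < u j) := by
    intro i j hij
    rcases key i j hij with h1 | h1 <;> rcases key j i hij.symm with h2 | h2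
    · exact absurd h2 (lt_asymm h1)
    · exact Or.inr ⟨h1, h2⟩
    · exact Or.inl ⟨h2, h1⟩
    · exact absurd h2 (lt_asymm h1)
  have tlt : ∀ i j, i ≠ j → t i < u j := by
    intro i j hij
    rcases key2 i j hij with ⟨h1, _⟩ | ⟨_, h2⟩
    · exact lt_of_lt_of_le h1 (htu j)
    · exact lt_of_le_of_lt (htu i) h2
  have tinj : Function.Injective t := by
    intro i j h
    by_contra hij
    rcases key2 i j hij with ⟨h1, _⟩ | ⟨h1, _⟩
    · exact h1.ne h
    · exact h1.ne' h
  have uinj : Function.Injective u := by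
    intro i j h
    by_contra hij
    rcases key2 i j hij with ⟨_, h1⟩ | ⟨_, h1⟩
    · exact h1.ne' h
    · exact h1.ne h
  -- counting
  set T : Finset (WithTop ℕ) := Finset.univ.image t with hT
  set U : Finset (WithTop ℕ) := Finset.univ.image u with hU
  have hTcard : T.card = m := by
    rw [hT, Finset.card_image_of_injective _ tinj, Finset.card_univ, Fintype.card_fin]
  have hUcard : U.card = m := by
    rw [hU, Finset.card_image_of_injective _ uinj, Finset.card_univ, Fintype.card_fin]
  have hinter : (T ∩ U).card ≤ 1 := by
    rw [Finset.card_le_one]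
    intro a ha b hb
    rw [Finset.mem_inter] at ha hb
    obtain ⟨hat, hau⟩ := ha
    obtain ⟨hbt, hbu⟩ := hb
    obtain ⟨i, _, hi⟩ := Finset.mem_image.mp hat
    obtain ⟨i', _, hi'⟩ := Finset.mem_image.mp hau
    obtain ⟨j, _, hj⟩ := Finset.mem_image.mp hbt
    obtain ⟨j', _, hj'⟩ := Finset.mem_image.mp hbu
    have hii : i = i' := by
      by_contra hne
      exact (tlt i i' hne).ne (hi.trans hi'.symm)
    have hjj : j = j' := by
      by_contra hne
      exact (tlt j j' hne).ne (hj.trans hj'.symm)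
    subst hii; subst hjj
    by_contra hab
    have hij : i ≠ j := fun h => hab (by rw [← hi, ← hj, h])
    have h1 : t i < u j := tlt i j hij
    have h2 : t j < u i := tlt j i hij.symm
    rw [hi, hj'] at h1
    rw [hj, hi'] at h2
    exact absurd (h1.trans h2) (lt_irrefl _)
  have hTU : 2 * m ≤ (T ∪ U).card + 1 := by
    have := Finset.card_union_add_card_inter T U
    omega
  -- the union minus ⊤ maps into S
  have hsubset : (T ∪ U).erase ⊤ ⊆ S.image (fun x : ℕ => (x : WithTop ℕ)) := by
    intro a ha
    rw [Finset.mem_erase] at ha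
    obtain ⟨hane, ha⟩ := ha
    obtain ⟨x, hx⟩ := WithTop.ne_top_iff_exists.mp hane
    rw [Finset.mem_image]
    refine ⟨x, ?_, hx⟩
    rcases Finset.mem_union.mp ha with h | h
    · obtain ⟨i, _, hi⟩ := Finset.mem_image.mp h
      have : x ∈ A i 1 ∪ A i 2 := Finset.mem_of_min (hi.trans hx.symm)
      rcases Finset.mem_union.mp this with h' | h'
      · exact hmemS i 1 x h'
      · exact hmemS i 2 x h'
    · obtain ⟨i, _, hi⟩ := Finset.mem_image.mp h
      have : x ∈ A i 2 := Finset.mem_of_min (hi.trans hx.symm)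
      exact hmemS i 2 x this
  have hScard : ((T ∪ U).erase ⊤).card ≤ S.card := by
    calc ((T ∪ U).erase ⊤).card ≤ (S.image (fun x : ℕ => (x : WithTop ℕ))).card :=
          Finset.card_le_card hsubset
      _ = S.card := Finset.card_image_of_injective _ (fun a b h => by exact_mod_cast h)
  have herase : (T ∪ U).card ≤ ((T ∪ U).erase ⊤).card + 1 := by
    have h1 : T ∪ U ⊆ insert ⊤ ((T ∪ U).erase ⊤) := fun a ha => by
      rcases eq_or_ne a ⊤ with h | h
      · exact h ▸ Finset.mem_insert_self _ _
      · exact Finset.mem_insert_of_mem (Finset.mem_erase.mpr ⟨h, ha⟩)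
    calc (T ∪ U).card ≤ (insert ⊤ ((T ∪ U).erase ⊤)).card := Finset.card_le_card h1
      _ ≤ ((T ∪ U).erase ⊤).card + 1 := Finset.card_insert_le _ _
  omega
end

section
/- Let s be a positive integer. For each l ∈ {1,…,⌊s/2⌋+1} define B_l^{(1)} = {1,…,l-1}, B_l^{(2)} = {l,…,s-l+1}, and B_l^{(3)} = {s-l+2,…,s} (with the convention that such a set is empty when its lower endpoint exceeds its upper endpoint). Then {(B_l^{(1)}, B_l^{(2)}, B_l^{(3)})}_{1≤l≤⌊s/2⌋+1} is a Bollobás system of 3-partitions of [s] with B_l^{(1)} ∪ B_l^{(2)} ∪ B_l^{(3)} = [s] and B_l^{(1)} < B_l^{(2)} < B_l^{(3)} for every l; in particular the maximum size ⌊s/2⌋ + 1 of such an ordered Bollobás system of 3-partitions with support of size s is attained. -/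
/-- **Proposition (`N_B(3,s) ≥ ⌊s/2⌋ + 1`: the explicit construction).** For a
positive integer `s` and `l ∈ [⌊s/2⌋+1]`, let `B_l^{(1)} = [1, l-1]`,
`B_l^{(2)} = [l, s-l+1]`, `B_l^{(3)} = [s-l+2, s]` (here `l = l₀ + 1` with
`l₀ = 0, …, ⌊s/2⌋`, so `B_l^{(1)} = Icc 1 l₀`, `B_l^{(2)} = Icc (l₀+1) (s-l₀)`,
`B_l^{(3)} = Icc (s-l₀+1) s`). Then `{(B_l^{(1)}, B_l^{(2)}, B_l^{(3)})}_l` is a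
Bollobás system of full `3`-partitions of `[s]` with
`B_l^{(1)} < B_l^{(2)} < B_l^{(3)}` for every `l`; hence the maximum size
`⌊s/2⌋ + 1` is attained. -/
theorem bollobas_three_ordered_tight (s : ℕ) (hs : 1 ≤ s)
    (B : Fin (s / 2 + 1) → Fin 3 → Finset ℕ)
    (hB : ∀ l : Fin (s / 2 + 1),
      B l 0 = Finset.Icc 1 l.val ∧
      B l 1 = Finset.Icc (l.val + 1) (s - l.val) ∧
      B l 2 = Finset.Icc (s - l.val + 1) s) :
    (∀ l, ∀ p q : Fin 3, p ≠ q → Disjoint (B l p) (B l q)) ∧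
    (∀ l, (B l 0) ∪ (B l 1) ∪ (B l 2) = Finset.Icc 1 s) ∧
    (∀ l, ∀ r₁ r₂ : Fin 3, r₁ < r₂ →
      ∀ x ∈ B l r₁, ∀ y ∈ B l r₂, x < y) ∧
    (∀ l l' : Fin (s / 2 + 1), l ≠ l' →
      ∃ p q : Fin 3, p < q ∧ ((B l p) ∩ (B l' q)).Nonempty) := by
  refine ⟨?_, ?_, ?_, ?_⟩
  · intro l p q hpq
    obtain ⟨h0, h1, h2⟩ := hB l
    have hl : l.val ≤ s / 2 := Nat.lt_succ_iff.mp l.isLt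
    rw [Finset.disjoint_left]
    intro a ha ha'
    fin_cases p <;> fin_cases q <;> simp_all [Finset.mem_Icc] <;> omega
  · intro l
    obtain ⟨h0, h1, h2⟩ := hB l
    have hl : l.val ≤ s / 2 := Nat.lt_succ_iff.mp l.isLt
    ext a
    simp only [h0, h1, h2, Finset.mem_union, Finset.mem_Icc]
    omega
  · intro l r₁ r₂ hr x hx y hy
    obtain ⟨h0, h1, h2⟩ := hB l
    have hl : l.val ≤ s / 2 := Nat.lt_succ_iff.mp l.isLt
    fin_cases r₁ <;> fin_cases r₂ <;> simp_all [Finset.mem_Icc] <;> omega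
  · intro l l' hne
    obtain ⟨h0, h1, h2⟩ := hB l
    obtain ⟨h0', h1', h2'⟩ := hB l'
    have hl : l.val ≤ s / 2 := Nat.lt_succ_iff.mp l.isLt
    have hl' : l'.val ≤ s / 2 := Nat.lt_succ_iff.mp l'.isLt
    have hne' : l.val ≠ l'.val := fun h => hne (Fin.ext h)
    rcases lt_or_gt_of_ne hne' with h | h
    · refine ⟨1, 2, by decide, s - l'.val + 1, ?_⟩
      simp only [Finset.mem_inter, h1, h2', Finset.mem_Icc]
      omega
    · refine ⟨0, 1, by decide, l'.val + 1, ?_⟩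
      simp only [Finset.mem_inter, h0, h1', Finset.mem_Icc]
      omega
end
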